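/- arXiv:2305.01177 — 2 statements merged into one kernel-verified Lean document; each statement's English description precedes it below -/
import Mathlib

section
/- Let b > 0, T ∈ ℝ, k ≥ 1 and a₁, …, a_k ∈ ℝ, and for 1 ≤ j ≤ k set p_j = exp(a_j/b) / (exp(T/b) + Σ_{i=1}^{j} exp(a_i/b)). Then the probability, under the product measure of k+1 independent Gumbel distributions of scale b with coordinates v₀, v₁, …, v_k, of the event {a_i + v_i < T + v₀ for all 1 ≤ i ≤ k−1, and a_k + v_k ≥ T + v₀} equals p_k · ∏_{j=1}^{k−1} (1 − p_j). (Thus AboveThreshold with Gumbel noise and equal threshold and query noise scales has the same output distribution as the Iterative Exponential Mechanism, which at step j halts with probability p_j.) -/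
open MeasureTheory Real Set Filter Topology

/-- The Gumbel distribution with scale `b`: density `z ↦ (1/b)·exp(−(z/b + exp(−z/b)))`
with respect to Lebesgue measure. -/
noncomputable def gumbel (b : ℝ) : Measure ℝ :=
  volume.withDensity fun z => ENNReal.ofReal ((1 / b) * Real.exp (-(z / b + Real.exp (-(z / b)))))

noncomputable def gF (b γ x : ℝ) : ℝ := Real.exp (-γ * Real.exp (-(x/b)))
noncomputable def gf (b γ x : ℝ) : ℝ := γ/b * Real.exp (-(x/b)) * gF b γ x

lemma gf_nonneg {b γ : ℝ} (hb : 0 < b) (hγ : 0 ≤ γ) (x : ℝ) : 0 ≤ gf b γ x := by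
  unfold gf gF; positivity

lemma hasDerivAt_gF {b : ℝ} (hb : b ≠ 0) (γ x : ℝ) : HasDerivAt (gF b γ) (gf b γ x) x := by
  have h1 : HasDerivAt (fun x : ℝ => -(x/b)) (-(1/b)) x := by
    exact ((hasDerivAt_id' x).div_const b).neg
  have h2 := h1.exp
  have h3 := h2.const_mul (-γ)
  have h4 := h3.exp
  convert h4 using 1
  · rfl
  unfold gf gF
  ring

lemma continuous_gf (b γ : ℝ) : Continuous (gf b γ) := by
  unfold gf gF; fun_prop

lemma lint_Ioc {b γ : ℝ} (hb : 0 < b) (hγ : 0 ≤ γ) {s t : ℝ} (hst : s ≤ t) :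
    ∫⁻ x in Ioc s t, ENNReal.ofReal (gf b γ x) = ENNReal.ofReal (gF b γ t - gF b γ s) := by
  have hint : IntegrableOn (gf b γ) (Ioc s t) :=
    (continuous_gf b γ).integrableOn_Ioc
  rw [← ofReal_integral_eq_lintegral_ofReal hint
      (Filter.Eventually.of_forall fun x => gf_nonneg hb hγ x)]
  congr 1
  rw [← intervalIntegral.integral_of_le hst]
  exact intervalIntegral.integral_eq_sub_of_hasDerivAt
    (fun x _ => hasDerivAt_gF hb.ne' γ x) ((continuous_gf b γ).intervalIntegrable s t)

lemma tendsto_gF_atBot {b γ : ℝ} (hb : 0 < b) (hγ : 0 < γ) :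
    Tendsto (gF b γ) atBot (𝓝 0) := by
  have h1 : Tendsto (fun x : ℝ => -(x/b)) atBot atTop :=
    tendsto_neg_atBot_atTop.comp (tendsto_id.atBot_div_const hb)
  have h2 : Tendsto (fun x : ℝ => -γ * Real.exp (-(x/b))) atBot atBot := by
    have hexp : Tendsto (fun x : ℝ => Real.exp (-(x/b))) atBot atTop :=
      Real.tendsto_exp_atTop.comp h1
    exact hexp.const_mul_atTop_of_neg (neg_neg_iff_pos.mpr hγ)
  exact Real.tendsto_exp_atBot.comp h2

lemma tendsto_gF_atTop {b γ : ℝ} (hb : 0 < b) :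
    Tendsto (gF b γ) atTop (𝓝 1) := by
  have h1 : Tendsto (fun x : ℝ => -(x/b)) atTop atBot :=
    tendsto_neg_atTop_atBot.comp (tendsto_id.atTop_div_const hb)
  have h2 : Tendsto (fun x : ℝ => -γ * Real.exp (-(x/b))) atTop (𝓝 (-γ * 0)) :=
    (Real.tendsto_exp_atBot.comp h1).const_mul _
  rw [mul_zero] at h2
  have h3 := (Real.continuous_exp.tendsto 0).comp h2
  rw [Real.exp_zero] at h3
  exact h3

lemma meas_gf (b γ : ℝ) : Measurable fun x => ENNReal.ofReal (gf b γ x) :=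
  (continuous_gf b γ).measurable.ennreal_ofReal

lemma lint_Iic {b γ : ℝ} (hb : 0 < b) (hγ : 0 < γ) (t : ℝ) :
    ∫⁻ x in Iic t, ENNReal.ofReal (gf b γ x) = ENNReal.ofReal (gF b γ t) := by
  set μ := volume.withDensity fun x => ENNReal.ofReal (gf b γ x) with hμ
  have happ : ∀ s : Set ℝ, MeasurableSet s → μ s = ∫⁻ x in s, ENNReal.ofReal (gf b γ x) :=
    fun s hs => withDensity_apply _ hs
  have hunion : (⋃ n : ℕ, Ioc (t - n) t) = Iic t := by
    ext x
    simp only [mem_iUnion, mem_Ioc, mem_Iic]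
    constructor
    · rintro ⟨n, _, h⟩; exact h
    · intro hx
      obtain ⟨n, hn⟩ := exists_nat_gt (t - x)
      exact ⟨n, by linarith, hx⟩
  have hmono : Monotone fun n : ℕ => Ioc (t - n) t := by
    intro n n' hnn' x hx
    refine ⟨lt_of_le_of_lt ?_ hx.1, hx.2⟩
    have : (n:ℝ) ≤ n' := by exact_mod_cast hnn'
    linarith
  have h1 : Tendsto (fun n : ℕ => μ (Ioc (t - n) t)) atTop (𝓝 (μ (Iic t))) := by
    rw [← hunion]
    exact tendsto_measure_iUnion_atTop hmono
  have h2 : ∀ n : ℕ, μ (Ioc (t - n) t) = ENNReal.ofReal (gF b γ t - gF b γ (t - n)) := by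
    intro n
    rw [happ _ measurableSet_Ioc, lint_Ioc hb hγ.le (by simp [Nat.cast_nonneg])]
  have h3 : Tendsto (fun n : ℕ => ENNReal.ofReal (gF b γ t - gF b γ (t - n))) atTop
      (𝓝 (ENNReal.ofReal (gF b γ t - 0))) := by
    apply (ENNReal.continuous_ofReal.tendsto _).comp
    apply Tendsto.const_sub
    have hbot : Tendsto (fun n : ℕ => t - (n : ℝ)) atTop atBot := by
      apply Filter.tendsto_atBot_add_const_left
      exact tendsto_neg_atTop_atBot.comp tendsto_natCast_atTop_atTop
    exact (tendsto_gF_atBot hb hγ).comp hbot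
  rw [← happ _ measurableSet_Iic]
  have := tendsto_nhds_unique (h1.congr fun n => (h2 n)) (by simpa using h3)
  simpa using this

lemma lint_univ {b γ : ℝ} (hb : 0 < b) (hγ : 0 < γ) :
    ∫⁻ x, ENNReal.ofReal (gf b γ x) = 1 := by
  set μ := volume.withDensity fun x => ENNReal.ofReal (gf b γ x) with hμ
  have hunion : (⋃ n : ℕ, Ioc (-(n:ℝ)) n) = univ := by
    ext x
    simp only [mem_iUnion, mem_Ioc, mem_univ, iff_true]
    obtain ⟨n, hn⟩ := exists_nat_gt |x|
    exact ⟨n, by cases abs_lt.mp hn; linarith, by cases abs_lt.mp hn; linarith⟩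
  have hmono : Monotone fun n : ℕ => Ioc (-(n:ℝ)) n := by
    intro n n' hnn' x hx
    have : (n:ℝ) ≤ n' := by exact_mod_cast hnn'
    exact ⟨by cases hx; linarith, by cases hx; linarith⟩
  have h1 : Tendsto (fun n : ℕ => μ (Ioc (-(n:ℝ)) n)) atTop (𝓝 (μ univ)) := by
    rw [← hunion]; exact tendsto_measure_iUnion_atTop hmono
  have h2 : ∀ n : ℕ, μ (Ioc (-(n:ℝ)) n) = ENNReal.ofReal (gF b γ n - gF b γ (-(n:ℝ))) := by
    intro n
    rw [withDensity_apply _ measurableSet_Ioc, lint_Ioc hb hγ.le (by have := Nat.cast_nonneg (α := ℝ) n; linarith)]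
  have h3 : Tendsto (fun n : ℕ => ENNReal.ofReal (gF b γ n - gF b γ (-(n:ℝ)))) atTop
      (𝓝 (ENNReal.ofReal (1 - 0))) := by
    apply (ENNReal.continuous_ofReal.tendsto _).comp
    apply Tendsto.sub
    · exact (tendsto_gF_atTop hb).comp tendsto_natCast_atTop_atTop
    · exact (tendsto_gF_atBot hb hγ).comp
        (tendsto_neg_atTop_atBot.comp tendsto_natCast_atTop_atTop)
  have := tendsto_nhds_unique (h1.congr fun n => (h2 n)) h3
  have huniv : μ univ = ∫⁻ x, ENNReal.ofReal (gf b γ x) := by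
    rw [withDensity_apply _ MeasurableSet.univ, Measure.restrict_univ]
  rw [← huniv, this]
  simp

lemma gF_nonneg (b γ x : ℝ) : 0 ≤ gF b γ x := (Real.exp_pos _).le

lemma gF_le_one {b γ : ℝ} (hγ : 0 ≤ γ) (x : ℝ) : gF b γ x ≤ 1 := by
  rw [gF, ← Real.exp_zero]
  apply Real.exp_le_exp.mpr
  have : 0 ≤ γ * Real.exp (-(x/b)) := by positivity
  linarith

lemma gumbel_eq (b : ℝ) :
    gumbel b = volume.withDensity fun x => ENNReal.ofReal (gf b 1 x) := by
  unfold gumbel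
  congr 1
  funext z
  congr 1
  rw [gf, gF, neg_add, Real.exp_add]
  ring

lemma gumbel_Iic {b : ℝ} (hb : 0 < b) (t : ℝ) :
    gumbel b (Iic t) = ENNReal.ofReal (gF b 1 t) := by
  rw [gumbel_eq, withDensity_apply _ measurableSet_Iic, lint_Iic hb one_pos]

lemma gumbel_singleton (b t : ℝ) : gumbel b {t} = 0 := by
  rw [gumbel_eq, withDensity_apply _ (measurableSet_singleton t)]
  exact setLIntegral_measure_zero _ _ (Real.volume_singleton)

lemma gumbel_Iio {b : ℝ} (hb : 0 < b) (t : ℝ) :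
    gumbel b (Iio t) = ENNReal.ofReal (gF b 1 t) := by
  have h1 : gumbel b (Iic t) ≤ gumbel b (Iio t) + gumbel b {t} := by
    rw [← Iio_union_right]; exact measure_union_le _ _
  rw [gumbel_singleton, add_zero] at h1
  have h2 := measure_mono (Iio_subset_Iic_self : Iio t ⊆ Iic t) (μ := gumbel b)
  rw [← gumbel_Iic hb]
  exact le_antisymm h2 h1

lemma gumbel_univ {b : ℝ} (hb : 0 < b) : gumbel b univ = 1 := by
  rw [gumbel_eq, withDensity_apply _ MeasurableSet.univ, Measure.restrict_univ,
    lint_univ hb one_pos]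

lemma gumbel_Ici {b : ℝ} (hb : 0 < b) (t : ℝ) :
    gumbel b (Ici t) = ENNReal.ofReal (1 - gF b 1 t) := by
  have hlt : gumbel b (Iio t) ≠ ⊤ := by
    rw [gumbel_Iio hb]; exact ENNReal.ofReal_ne_top
  rw [← compl_Iio, measure_compl measurableSet_Iio hlt, gumbel_univ hb, gumbel_Iio hb,
    ← ENNReal.ofReal_one, ← ENNReal.ofReal_sub _ (gF_nonneg b 1 t)]

lemma sum_fin_eq_sum_Icc (E : ℕ → ℝ) (m : ℕ) :
    ∑ i : Fin m, E ((i : ℕ) + 1) = ∑ i ∈ Finset.Icc 1 m, E i := by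
  rw [Fin.sum_univ_eq_sum_range (fun i => E (i + 1))]
  induction m with
  | zero => simp
  | succ n ih =>
    rw [Finset.sum_range_succ, ih, Finset.sum_Icc_succ_top (Nat.le_add_left 1 n)]

lemma prod_telescope (e0 : ℝ) (he0 : 0 < e0) (E p : ℕ → ℝ) (hEpos : ∀ i, 0 < E i) (m : ℕ)
    (hp : ∀ j, 1 ≤ j → j ≤ m → p j = E j / (e0 + ∑ i ∈ Finset.Icc 1 j, E i)) :
    ∏ j ∈ Finset.Icc 1 m, (1 - p j) = e0 / (e0 + ∑ i ∈ Finset.Icc 1 m, E i) := by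
  induction m with
  | zero => simp [(div_self he0.ne').symm]
  | succ n ih =>
    rw [Finset.prod_Icc_succ_top (Nat.le_add_left 1 n),
      Finset.sum_Icc_succ_top (Nat.le_add_left 1 n),
      ih (fun j h1 h2 => hp j h1 (by omega)), hp (n + 1) (by omega) le_rfl,
      Finset.sum_Icc_succ_top (Nat.le_add_left 1 n)]
    have hs : 0 ≤ ∑ i ∈ Finset.Icc 1 n, E i := Finset.sum_nonneg fun i _ => (hEpos i).le
    have h1 : 0 < e0 + ∑ i ∈ Finset.Icc 1 n, E i := by linarith
    have h2 : 0 < e0 + (∑ i ∈ Finset.Icc 1 n, E i + E (n + 1)) := by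
      have := hEpos (n + 1); linarith
    field_simp
    ring

/-- The event that `AboveThreshold` with threshold `T` and query values `a 1, a 2, …` halts
exactly at query `k`: coordinates `v 0, v 1, …, v k` are the noise on the threshold and on
queries `1, …, k`. -/
def haltEvent (T : ℝ) (a : ℕ → ℝ) (k : ℕ) : Set (Fin (k + 1) → ℝ) :=
  {v | (∀ i : Fin (k + 1), 1 ≤ (i : ℕ) → (i : ℕ) < k → a i + v i < T + v 0) ∧
       T + v 0 ≤ a k + v (Fin.last k)}

set_option maxHeartbeats 2000000 in
/-- AboveThreshold with Gumbel noise (equal scales) has the same output distribution as the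
Iterative Exponential Mechanism: the probability of halting exactly at query `k` equals
`p k · ∏_{j=1}^{k-1} (1 − p j)`, where `p j` is the probability that the exponential mechanism
over candidates `{0,…,j}` with scores `(T, a 1, …, a j)` selects candidate `j`. -/
theorem gumbel_aboveThreshold_eq_iterative_exponential (b T : ℝ) (hb : 0 < b) (k : ℕ)
    (hk : 1 ≤ k) (a : ℕ → ℝ) (p : ℕ → ℝ)
    (hp : ∀ j : ℕ, 1 ≤ j → j ≤ k →
      p j = Real.exp (a j / b) /
        (Real.exp (T / b) + ∑ i ∈ Finset.Icc 1 j, Real.exp (a i / b))) :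
    Measure.pi (fun _ : Fin (k + 1) => gumbel b) (haltEvent T a k) =
      ENNReal.ofReal (p k * ∏ j ∈ Finset.Icc 1 (k - 1), (1 - p j)) := by
  obtain ⟨m, rfl⟩ : ∃ m, k = m + 1 := ⟨k - 1, (Nat.succ_pred_eq_of_pos hk).symm⟩
  set E : ℕ → ℝ := fun i => Real.exp (a i / b) with hE
  set e0 : ℝ := Real.exp (T / b) with he0
  set S : ℝ := ∑ i ∈ Finset.Icc 1 m, E i with hS
  have hSnn : 0 ≤ S := Finset.sum_nonneg fun i _ => (Real.exp_pos _).le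
  have he0pos : 0 < e0 := Real.exp_pos _
  have hEpos : ∀ i, 0 < E i := fun i => Real.exp_pos _
  -- instances
  haveI hfin : IsFiniteMeasure (gumbel b) :=
    ⟨by rw [gumbel_univ hb]; exact ENNReal.one_lt_top⟩
  -- measurability of the event
  have hmeas : MeasurableSet (haltEvent T a (m + 1)) := by
    have : haltEvent T a (m + 1) =
        (⋂ i : Fin (m + 2), ⋂ (_ : 1 ≤ (i : ℕ)), ⋂ (_ : (i : ℕ) < m + 1),
          {v : Fin (m + 2) → ℝ | a i + v i < T + v 0}) ∩
        {v : Fin (m + 2) → ℝ | T + v 0 ≤ a (m + 1) + v (Fin.last (m + 1))} := by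
      ext v
      simp [haltEvent, Set.mem_iInter]
    rw [this]
    refine MeasurableSet.inter ?_ (measurableSet_le (by fun_prop) (by fun_prop))
    exact MeasurableSet.iInter fun i => MeasurableSet.iInter fun _ =>
      MeasurableSet.iInter fun _ => measurableSet_lt (by fun_prop) (by fun_prop)
  -- decompose the product measure along coordinate 0
  set eqv := MeasurableEquiv.piFinSuccAbove (fun _ : Fin (m + 2) => ℝ) 0 with heqv
  have hmp := (measurePreserving_piFinSuccAbove (fun _ : Fin (m + 2) => gumbel b) 0).symm
  have hdecomp : Measure.pi (fun _ : Fin (m + 2) => gumbel b) (haltEvent T a (m + 1)) =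
      ((gumbel b).prod (Measure.pi fun _ : Fin (m + 1) => gumbel b))
        (eqv.symm ⁻¹' haltEvent T a (m + 1)) := by
    exact (hmp.measure_preimage hmeas.nullMeasurableSet).symm
  -- the slice of the event over threshold noise `x` is a product set
  set C : ℝ → Fin (m + 1) → Set ℝ := fun x j =>
    if (j : ℕ) < m then Iio (T + x - a ((j : ℕ) + 1)) else Ici (T + x - a (m + 1)) with hC
  have hslice : ∀ x : ℝ, (Prod.mk x ⁻¹' (eqv.symm ⁻¹' haltEvent T a (m + 1))) =
      Set.pi univ (C x) := by
    intro x
    ext w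
    have hins : eqv.symm (x, w) = Fin.cons x w := by
      rw [heqv, MeasurableEquiv.piFinSuccAbove_symm_apply]
      exact Fin.insertNth_zero' x w
    simp only [mem_preimage, hins, haltEvent, mem_setOf_eq, Set.mem_pi, mem_univ,
      forall_true_left]
    constructor
    · rintro ⟨h1, h2⟩ j
      rw [hC]
      by_cases hj : (j : ℕ) < m
      · simp only [hj, if_true, mem_Iio]
        have := h1 j.succ (by simp) (by simpa using Nat.succ_lt_succ hj)
        simp only [Fin.cons_succ, Fin.cons_zero, Fin.val_succ] at this
        linarith
      · simp only [hj, if_false, mem_Ici]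
        have hjl : j = Fin.last m := by
          apply Fin.ext
          simp only [Fin.val_last]
          have h3 := j.isLt
          omega
        have h2' := h2
        rw [← Fin.succ_last, Fin.cons_succ, Fin.cons_zero] at h2'
        rw [hjl]
        linarith
    · intro h
      constructor
      · intro i hi1 hi2
        rcases Fin.eq_zero_or_eq_succ i with rfl | ⟨j, rfl⟩
        · simp at hi1
        · have hj : (j : ℕ) < m := by
            simp only [Fin.val_succ] at hi2; omega
          have := h j
          rw [hC] at this
          simp only [hj, if_true, mem_Iio] at this
          simp only [Fin.cons_succ, Fin.cons_zero, Fin.val_succ]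
          linarith
      · have := h (Fin.last m)
        rw [hC] at this
        simp only [Fin.val_last, lt_irrefl, if_false, mem_Ici] at this
        rw [← Fin.succ_last, Fin.cons_succ, Fin.cons_zero]
        linarith
  -- continuity of gF
  have hcontF : ∀ γ : ℝ, Continuous (gF b γ) := fun γ => by unfold gF; fun_prop
  -- the inner measure of each slice
  set R : ℝ → ℝ := fun x => (∏ j : Fin m, gF b 1 (T + x - a ((j : ℕ) + 1))) *
    (1 - gF b 1 (T + x - a (m + 1))) with hR
  have hRcont : Continuous R := by
    rw [hR]
    apply Continuous.mul
    · apply continuous_finset_prod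
      intro j _
      exact (hcontF 1).comp (by fun_prop)
    · exact continuous_const.sub ((hcontF 1).comp (by fun_prop))
  have hRnn : ∀ x, 0 ≤ R x := by
    intro x
    rw [hR]
    apply mul_nonneg
    · exact Finset.prod_nonneg fun j _ => gF_nonneg _ _ _
    · have := gF_le_one (b := b) (zero_le_one) (T + x - a (m + 1))
      linarith
  have hinner : ∀ x : ℝ, (Measure.pi fun _ : Fin (m + 1) => gumbel b) (Set.pi univ (C x)) =
      ENNReal.ofReal (R x) := by
    intro x
    rw [Measure.pi_pi, Fin.prod_univ_castSucc]
    have h1 : ∀ j : Fin m, gumbel b (C x j.castSucc) =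
        ENNReal.ofReal (gF b 1 (T + x - a ((j : ℕ) + 1))) := by
      intro j
      rw [hC]
      simp only [Fin.coe_castSucc, j.isLt, if_true]
      exact gumbel_Iio hb _
    have h2 : gumbel b (C x (Fin.last m)) = ENNReal.ofReal (1 - gF b 1 (T + x - a (m + 1))) := by
      rw [hC]
      simp only [Fin.val_last, lt_irrefl, if_false]
      exact gumbel_Ici hb _
    rw [h2]
    simp_rw [h1]
    rw [← ENNReal.ofReal_prod_of_nonneg (fun j _ => gF_nonneg _ _ _),
      ← ENNReal.ofReal_mul (Finset.prod_nonneg fun j _ => gF_nonneg _ _ _)]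
  -- the measure as a single Lebesgue integral
  have hcalc : Measure.pi (fun _ : Fin (m + 2) => gumbel b) (haltEvent T a (m + 1)) =
      ∫⁻ x, ENNReal.ofReal (gf b 1 x * R x) := by
    rw [hdecomp, Measure.prod_apply (eqv.symm.measurable hmeas)]
    have : ∀ x : ℝ, (Measure.pi fun _ : Fin (m + 1) => gumbel b)
        (Prod.mk x ⁻¹' (eqv.symm ⁻¹' haltEvent T a (m + 1))) = ENNReal.ofReal (R x) := by
      intro x
      rw [hslice x, hinner x]
    simp_rw [this]
    rw [gumbel_eq, lintegral_withDensity_eq_lintegral_mul _ (meas_gf b 1)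
      hRcont.measurable.ennreal_ofReal]
    congr 1
    funext x
    simp only [Pi.mul_apply]
    rw [← ENNReal.ofReal_mul (gf_nonneg hb zero_le_one x)]
  -- the pointwise identity
  set α : ℝ := 1 + S / e0 with hα
  set β : ℝ := 1 + S / e0 + E (m + 1) / e0 with hβ
  have hαpos : 0 < α := by rw [hα]; positivity
  have hβpos : 0 < β := by rw [hβ]; positivity
  have hαβ : α ≤ β := by
    rw [hα, hβ]
    have : 0 ≤ E (m + 1) / e0 := by positivity
    linarith
  have hexpkey : ∀ i x : ℝ, Real.exp (-((T + x - i) / b)) =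
      Real.exp (i / b) / e0 * Real.exp (-(x / b)) := by
    intro i x
    rw [he0, ← Real.exp_sub, ← Real.exp_add]
    congr 1
    field_simp
    ring
  have hSsum : ∀ x : ℝ, ∑ j : Fin m, (E ((j : ℕ) + 1) / e0 * Real.exp (-(x / b))) =
      S / e0 * Real.exp (-(x / b)) := by
    intro x
    rw [← Finset.sum_mul, ← Finset.sum_div]
    congr 2
    rw [hS]
    exact sum_fin_eq_sum_Icc E m
  have hptwise : ∀ x : ℝ, gf b 1 x * R x + 1 / β * gf b β x = 1 / α * gf b α x := by
    intro x
    set u : ℝ := Real.exp (-(x / b)) with hu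
    have hupos : 0 < u := Real.exp_pos _
    have hprodval : (∏ j : Fin m, gF b 1 (T + x - a ((j : ℕ) + 1))) =
        Real.exp (-(S / e0 * u)) := by
      unfold gF
      rw [← Real.exp_sum]
      congr 1
      have hterm : ∀ j : Fin m, -1 * Real.exp (-((T + x - a ((j : ℕ) + 1)) / b)) =
          -(E ((j : ℕ) + 1) / e0 * u) := by
        intro j
        rw [hexpkey (a ((j : ℕ) + 1)) x, ← hu]
        have : E ((j : ℕ) + 1) = Real.exp (a ((j : ℕ) + 1) / b) := by rw [hE]
        rw [this]
        ring
      rw [Finset.sum_congr rfl fun j _ => hterm j, Finset.sum_neg_distrib, hu, hSsum x]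
    have hlastval : gF b 1 (T + x - a (m + 1)) = Real.exp (-(E (m + 1) / e0 * u)) := by
      unfold gF
      rw [hexpkey (a (m + 1)) x, ← hu]
      congr 1
      have : E (m + 1) = Real.exp (a (m + 1) / b) := by rw [hE]
      rw [this]
      ring
    have hgf : ∀ γ : ℝ, gf b γ x = γ / b * u * Real.exp (-(γ * u)) := by
      intro γ
      unfold gf gF
      rw [← hu]
      ring_nf
    have heα : Real.exp (-(α * u)) = Real.exp (-u) * Real.exp (-(S / e0 * u)) := by
      rw [← Real.exp_add]
      congr 1
      rw [hα]
      ring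
    have heβ : Real.exp (-(β * u)) =
        Real.exp (-u) * Real.exp (-(S / e0 * u)) * Real.exp (-(E (m + 1) / e0 * u)) := by
      rw [← Real.exp_add, ← Real.exp_add]
      congr 1
      rw [hβ]
      ring
    rw [hR]
    simp only [hprodval, hlastval, hgf, heα, heβ]
    have h1 : Real.exp (-(1 * u)) = Real.exp (-u) := by norm_num
    rw [h1]
    field_simp
    ring
  -- evaluate the integrals
  have hγint : ∀ γ : ℝ, 0 < γ → ∫⁻ x, ENNReal.ofReal (1 / γ * gf b γ x) =
      ENNReal.ofReal (1 / γ) := by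
    intro γ hγ
    have hnn : (0:ℝ) ≤ 1 / γ := by positivity
    simp_rw [ENNReal.ofReal_mul hnn]
    rw [lintegral_const_mul _ (meas_gf b γ), lint_univ hb hγ, mul_one]
  have hmeasf : Measurable fun x => ENNReal.ofReal (gf b 1 x * R x) :=
    ((continuous_gf b 1).mul hRcont).measurable.ennreal_ofReal
  have hsum : (∫⁻ x, ENNReal.ofReal (gf b 1 x * R x)) + ENNReal.ofReal (1 / β) =
      ENNReal.ofReal (1 / α) := by
    rw [← hγint α hαpos, ← hγint β hβpos, ← lintegral_add_left hmeasf]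
    congr 1
    funext x
    rw [← ENNReal.ofReal_add (mul_nonneg (gf_nonneg hb zero_le_one x) (hRnn x))
      (mul_nonneg (one_div_nonneg.mpr hβpos.le) (gf_nonneg hb hβpos.le x)), hptwise x]
  have hinvle : 1 / β ≤ 1 / α := one_div_le_one_div_of_le hαpos hαβ
  have hmain : Measure.pi (fun _ : Fin (m + 2) => gumbel b) (haltEvent T a (m + 1)) =
      ENNReal.ofReal (1 / α - 1 / β) := by
    rw [hcalc]
    have h2 := ENNReal.eq_sub_of_add_eq ENNReal.ofReal_ne_top hsum
    rw [h2, ← ENNReal.ofReal_sub _ (one_div_nonneg.mpr hβpos.le)]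
  -- final algebra
  have hp' : ∀ j, 1 ≤ j → j ≤ m + 1 → p j = E j / (e0 + ∑ i ∈ Finset.Icc 1 j, E i) := by
    intro j h1 h2
    rw [hp j h1 h2, hE, he0]
  have hprodp : ∏ j ∈ Finset.Icc 1 m, (1 - p j) = e0 / (e0 + S) := by
    rw [prod_telescope e0 he0pos E p hEpos m (fun j h1 h2 => hp' j h1 (by omega)), hS]
  have hfinal : 1 / α - 1 / β = p (m + 1) * ∏ j ∈ Finset.Icc 1 m, (1 - p j) := by
    rw [hprodp, hp' (m + 1) (by omega) le_rfl,
      Finset.sum_Icc_succ_top (Nat.le_add_left 1 m), ← hS, hα, hβ]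
    have h1 : 0 < e0 + S := by linarith
    have h2 : 0 < e0 + (S + E (m + 1)) := by have := hEpos (m + 1); linarith
    have h3 : e0 + S + E (m + 1) ≠ 0 := by linarith
    field_simp
    ring
  rw [hmain, hfinal]
  norm_num
end

section
/- Let Δ > 0, ε₁, ε₂ > 0, T ∈ ℝ, k ≥ 1, and let a, b be real sequences with |a_i − b_i| ≤ Δ for all i. Set Δ_k = max_{1 ≤ i < k} max{0, b_i − a_i} (with Δ_k = 0 when k = 1). Let P_a(k) be the probability, under independent noise v₀ drawn from the exponential distribution of scale Δ/ε₁ and v₁, …, v_k each drawn from the exponential distribution of scale Δ/ε₂, of the event {a_i + v_i < T + v₀ for all 1 ≤ i ≤ k−1, and a_k + v_k ≥ T + v₀}, and let P_b(k) be the same probability with b in place of a. Then P_a(k) ≤ exp((ε₁/Δ)·Δ_k + (ε₂/Δ)·max{0, Δ_k − (b_k − a_k)}) · P_b(k). -/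
open MeasureTheory Real

/-- The exponential distribution with scale `b`: density `z ↦ (1/b)·exp(−z/b)` for `z ≥ 0`
(and `0` for `z < 0`) with respect to Lebesgue measure. -/
noncomputable def expDist (b : ℝ) : Measure ℝ :=
  volume.withDensity fun z =>
    ENNReal.ofReal (if 0 ≤ z then (1 / b) * Real.exp (-(z / b)) else 0)

/-- The density of `expDist`. -/
noncomputable def expDen (b : ℝ) (z : ℝ) : ENNReal :=
  ENNReal.ofReal (if 0 ≤ z then (1 / b) * Real.exp (-(z / b)) else 0)

lemma expDen_measurable (b : ℝ) : Measurable (expDen b) := by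
  unfold expDen
  apply ENNReal.measurable_ofReal.comp
  exact Measurable.ite (measurableSet_le measurable_const measurable_id) (by fun_prop) measurable_const

lemma expDist_eq (b : ℝ) : expDist b = volume.withDensity (expDen b) := rfl

instance (b : ℝ) : SigmaFinite (expDist b) := by
  rw [show expDist b = volume.withDensity
    (fun z => ENNReal.ofReal (if 0 ≤ z then (1 / b) * Real.exp (-(z / b)) else 0)) from rfl]
  infer_instance

/-- Pointwise shift bound for the exponential density. -/
lemma expDen_le_shift {s t : ℝ} (hs : 0 < s) (ht : 0 ≤ t) (z : ℝ) :
    expDen s z ≤ ENNReal.ofReal (Real.exp (t / s)) * expDen s (z + t) := by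
  unfold expDen
  by_cases hz : 0 ≤ z
  · have hzt : 0 ≤ z + t := by linarith
    rw [if_pos hz, if_pos hzt, ← ENNReal.ofReal_mul (Real.exp_nonneg _)]
    apply le_of_eq
    congr 1
    rw [mul_comm (Real.exp (t / s)), mul_assoc, ← Real.exp_add]
    congr 2
    ring
  · rw [if_neg hz]
    simp

theorem lintegral_pi_prod_aux : ∀ (n : ℕ) (μ : Fin n → Measure ℝ), (∀ i, SigmaFinite (μ i)) →
    ∀ (f : Fin n → ℝ → ENNReal), (∀ i, Measurable (f i)) →
    ∫⁻ x, ∏ i, f i (x i) ∂Measure.pi μ = ∏ i, ∫⁻ y, f i y ∂μ i := by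
  intro n
  induction n with
  | zero =>
    intro μ _ f _
    simp [lintegral_one, Measure.pi_univ]
  | succ n ih =>
    intro μ hσ f hf
    have hσ' : ∀ i, SigmaFinite (μ i) := hσ
    have hpres := measurePreserving_piFinSuccAbove μ 0
    have hm1 : Measurable fun z : ℝ × (Fin n → ℝ) => f 0 z.1 * ∏ j, f j.succ (z.2 j) := by
      apply Measurable.mul
      · exact (hf 0).comp measurable_fst
      · exact Finset.measurable_prod _ fun j _ =>
          (hf j.succ).comp ((measurable_pi_apply j).comp measurable_snd)
    have key := hpres.lintegral_comp hm1
    have heval : ∀ a : Fin (n + 1) → ℝ,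
        (fun z : ℝ × (Fin n → ℝ) => f 0 z.1 * ∏ j, f j.succ (z.2 j))
          ((MeasurableEquiv.piFinSuccAbove (fun _ => ℝ) 0) a) = ∏ i, f i (a i) := by
      intro a
      simp only [MeasurableEquiv.piFinSuccAbove_apply, Fin.removeNth]
      rw [Fin.prod_univ_succ]
      simp [Fin.succAbove_zero, Fin.tail]
    simp only [heval] at key
    rw [key, lintegral_prod_mul (f := f 0) (g := fun x : Fin n → ℝ => ∏ j, f j.succ (x j))
      (hf 0).aemeasurable
      (Finset.measurable_prod _ fun j _ => (hf j.succ).comp (measurable_pi_apply j)).aemeasurable]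
    have := ih (fun j => μ (Fin.succAbove 0 j)) (fun j => hσ _) (fun j => f j.succ) (fun j => hf _)
    simp only [Fin.succAbove_zero, Function.comp] at this ⊢
    rw [this, Fin.prod_univ_succ]

/-- `Measure.pi` of `withDensity`s is `withDensity` of the product density. -/
theorem pi_withDensity_prod (n : ℕ) (g : Fin n → ℝ → ENNReal) (hg : ∀ i, Measurable (g i))
    (hσ : ∀ i, SigmaFinite ((volume : Measure ℝ).withDensity (g i))) :
    Measure.pi (fun i => (volume : Measure ℝ).withDensity (g i)) =
      (volume : Measure (Fin n → ℝ)).withDensity (fun x => ∏ i, g i (x i)) := by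
  have : ∀ i : Fin n, SigmaFinite ((fun i => (volume : Measure ℝ).withDensity (g i)) i) := hσ
  refine (Measure.pi_eq (μ := fun i => (volume : Measure ℝ).withDensity (g i)) fun s hs => ?_)
  rw [withDensity_apply _ (MeasurableSet.univ_pi hs)]
  rw [show (volume : Measure (Fin n → ℝ)) = Measure.pi fun _ => volume from volume_pi]
  have hind : ∀ x : Fin n → ℝ,
      (Set.univ.pi s).indicator (fun x => ∏ i, g i (x i)) x
        = ∏ i, (s i).indicator (g i) (x i) := by
    intro x
    by_cases hx : x ∈ Set.univ.pi s
    · rw [Set.indicator_of_mem hx]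
      exact Finset.prod_congr rfl fun i _ =>
        (Set.indicator_of_mem (hx i (Set.mem_univ i)) _).symm
    · rw [Set.indicator_of_notMem hx]
      symm
      rw [Set.mem_pi] at hx
      push_neg at hx
      obtain ⟨j, _, hj⟩ := hx
      exact Finset.prod_eq_zero (Finset.mem_univ j) (Set.indicator_of_notMem hj _)
  rw [← lintegral_indicator (MeasurableSet.univ_pi hs)]
  simp_rw [hind]
  rw [lintegral_pi_prod_aux n (fun _ => volume) (fun _ => by infer_instance)
    (fun i => (s i).indicator (g i)) (fun i => (hg i).indicator (hs i))]
  exact Finset.prod_congr rfl fun i _ => by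
    rw [lintegral_indicator (hs i), withDensity_apply _ (hs i)]

lemma measurableSet_haltEvent (T : ℝ) (a : ℕ → ℝ) (k : ℕ) :
    MeasurableSet (haltEvent T a k) := by
  have h2 : MeasurableSet {v : Fin (k + 1) → ℝ | T + v 0 ≤ a k + v (Fin.last k)} :=
    measurableSet_le (by fun_prop) (by fun_prop)
  have h1 : ∀ i : Fin (k + 1),
      MeasurableSet {v : Fin (k + 1) → ℝ | 1 ≤ (i : ℕ) → (i : ℕ) < k → a i + v i < T + v 0} := by
    intro i
    by_cases hi : 1 ≤ (i : ℕ) ∧ (i : ℕ) < k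
    · have : {v : Fin (k + 1) → ℝ | 1 ≤ (i : ℕ) → (i : ℕ) < k → a i + v i < T + v 0}
          = {v : Fin (k + 1) → ℝ | a i + v i < T + v 0} := by
        ext v; simp [hi.1, hi.2]
      rw [this]
      exact measurableSet_lt (by fun_prop) (by fun_prop)
    · have : {v : Fin (k + 1) → ℝ | 1 ≤ (i : ℕ) → (i : ℕ) < k → a i + v i < T + v 0}
          = Set.univ := by
        apply Set.eq_univ_of_forall
        intro v hv1 hv2
        exact absurd ⟨hv1, hv2⟩ hi
      rw [this]; exact MeasurableSet.univ
  have : haltEvent T a k =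
      (⋂ i : Fin (k + 1), {v : Fin (k + 1) → ℝ | 1 ≤ (i : ℕ) → (i : ℕ) < k → a i + v i < T + v 0})
        ∩ {v : Fin (k + 1) → ℝ | T + v 0 ≤ a k + v (Fin.last k)} := by
    ext v
    simp only [haltEvent, Set.mem_setOf_eq, Set.mem_inter_iff, Set.mem_iInter]
  rw [this]
  exact (MeasurableSet.iInter h1).inter h2

/-- One-sided privacy loss of `AboveThreshold` with exponential noise:
`P_a(k) ≤ exp((ε₁/Δ)·Δ_k + (ε₂/Δ)·max{0, Δ_k − (b_k − a_k)}) · P_b(k)` where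
`Δ_k = max_{1 ≤ i < k} max{0, b_i − a_i}` (with `Δ_k = 0` when `k = 1`, via `sSup ∅ = 0`). -/
theorem expo_aboveThreshold_one_sided_bound (Δ ε₁ ε₂ T : ℝ) (hΔ : 0 < Δ)
    (hε₁ : 0 < ε₁) (hε₂ : 0 < ε₂) (k : ℕ) (hk : 1 ≤ k) (a b : ℕ → ℝ)
    (hsens : ∀ i : ℕ, |a i - b i| ≤ Δ)
    (Δk : ℝ) (hΔk : Δk = sSup {r : ℝ | ∃ i : ℕ, 1 ≤ i ∧ i < k ∧ r = max 0 (b i - a i)}) :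
    Measure.pi (fun i : Fin (k + 1) => if i = 0 then expDist (Δ / ε₁) else expDist (Δ / ε₂))
        (haltEvent T a k) ≤
      ENNReal.ofReal (Real.exp ((ε₁ / Δ) * Δk + (ε₂ / Δ) * max 0 (Δk - (b k - a k)))) *
        Measure.pi (fun i : Fin (k + 1) => if i = 0 then expDist (Δ / ε₁) else expDist (Δ / ε₂))
          (haltEvent T b k) := by
  set c : ℝ := max 0 (Δk - (b k - a k)) with hc
  have hc0 : 0 ≤ c := le_max_left _ _
  set S : Set ℝ := {r : ℝ | ∃ i : ℕ, 1 ≤ i ∧ i < k ∧ r = max 0 (b i - a i)} with hS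
  have hbdd : BddAbove S := by
    refine ⟨Δ, fun r hr => ?_⟩
    obtain ⟨i, h1, h2, rfl⟩ := hr
    refine max_le hΔ.le ?_
    calc b i - a i ≤ |b i - a i| := le_abs_self _
      _ = |a i - b i| := abs_sub_comm _ _
      _ ≤ Δ := hsens i
  have hΔk0 : 0 ≤ Δk := by
    by_cases hne : S.Nonempty
    · obtain ⟨r, hr⟩ := hne
      have hle : r ≤ Δk := hΔk ▸ le_csSup hbdd hr
      obtain ⟨i, h1, h2, hre⟩ := hr
      have h0r : (0 : ℝ) ≤ r := hre ▸ le_max_left _ _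
      linarith
    · rw [Set.not_nonempty_iff_eq_empty] at hne
      rw [hΔk, hne, Real.sSup_empty]
  have hΔkub : ∀ i : ℕ, 1 ≤ i → i < k → b i - a i ≤ Δk := by
    intro i h1 h2
    have : max 0 (b i - a i) ≤ Δk := hΔk ▸ le_csSup hbdd ⟨i, h1, h2, rfl⟩
    exact le_trans (le_max_right _ _) this
  have hckey : Δk ≤ (b k - a k) + c := by
    have := le_max_right 0 (Δk - (b k - a k)); rw [← hc] at this; linarith
  -- scales
  set s : Fin (k + 1) → ℝ := fun i => if i = 0 then Δ / ε₁ else Δ / ε₂ with hs'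
  have hspos : ∀ i, 0 < s i := by
    intro i
    by_cases h : i = 0 <;> simp [hs', h, div_pos hΔ hε₁, div_pos hΔ hε₂]
  have hmeas_eq : (fun i : Fin (k + 1) => if i = 0 then expDist (Δ / ε₁) else expDist (Δ / ε₂))
      = fun i => expDist (s i) := by
    funext i; by_cases h : i = 0 <;> simp [hs', h]
  rw [hmeas_eq]
  -- shift
  have hlast0 : Fin.last k ≠ (0 : Fin (k + 1)) := by
    intro h; have := congrArg Fin.val h; simp at this; omega
  set t : Fin (k + 1) → ℝ := fun i => if i = 0 then Δk else if i = Fin.last k then c else 0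
    with htdef
  have ht0 : ∀ i, 0 ≤ t i := by
    intro i
    by_cases h : i = 0
    · simp [htdef, h, hΔk0]
    · by_cases h' : i = Fin.last k
      · subst h'; simp [htdef, hlast0, hc0]
      · simp [htdef, h, h']
  -- event inclusion
  have hincl : ∀ v ∈ haltEvent T a k, v + t ∈ haltEvent T b k := by
    intro v hv
    obtain ⟨hv1, hv2⟩ := hv
    have ht00 : t 0 = Δk := by simp [htdef]
    constructor
    · intro i hi1 hik
      have hi0 : i ≠ 0 := by
        intro h; rw [h] at hi1; simp at hi1
      have hil : i ≠ Fin.last k := by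
        intro h; rw [h] at hik; simp at hik
      have hti : t i = 0 := by simp [htdef, hi0, hil]
      have h3 := hv1 i hi1 hik
      have hba := hΔkub i hi1 hik
      simp only [Pi.add_apply, hti, ht00]
      linarith
    · have htl : t (Fin.last k) = c := by simp [htdef, hlast0]
      simp only [Pi.add_apply, ht00, htl]
      linarith
  -- densities
  set E : ℝ := (ε₁ / Δ) * Δk + (ε₂ / Δ) * c with hE
  set G : (Fin (k + 1) → ℝ) → ENNReal := fun x => ∏ i, expDen (s i) (x i) with hG
  have hgm : ∀ i : Fin (k + 1), Measurable (expDen (s i)) := fun i => expDen_measurable _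
  have hσ : ∀ i : Fin (k + 1), SigmaFinite ((volume : Measure ℝ).withDensity (expDen (s i))) := by
    intro i; rw [← expDist_eq]; infer_instance
  have hpi : Measure.pi (fun i => expDist (s i)) = (volume : Measure (Fin (k + 1) → ℝ)).withDensity G := by
    simp_rw [expDist_eq]
    exact pi_withDensity_prod _ _ hgm hσ
  have hGm : Measurable G :=
    Finset.measurable_prod _ fun i _ => (hgm i).comp (measurable_pi_apply i)
  have hsum : ∑ i, t i / s i = E := by
    have hfun : ∀ i : Fin (k + 1), t i / s i =
        (if i = 0 then (ε₁ / Δ) * Δk else 0) + (if i = Fin.last k then (ε₂ / Δ) * c else 0) := by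
      intro i
      by_cases h : i = 0
      · simp only [htdef, hs', h, if_pos rfl, if_neg (Ne.symm hlast0), if_true]
        rw [add_zero]
        field_simp
      · by_cases h' : i = Fin.last k
        · simp only [htdef, hs', h, h', if_neg h, if_pos rfl, if_neg hlast0, if_true]
          rw [zero_add]
          field_simp
        · simp [htdef, hs', h, h']
    simp_rw [hfun]
    rw [Finset.sum_add_distrib]
    simp [Finset.sum_ite_eq', hE]
  have hGle : ∀ x, G x ≤ ENNReal.ofReal (Real.exp E) * G (x + t) := by
    intro x
    have h1 : G x ≤ ∏ i, (ENNReal.ofReal (Real.exp (t i / s i)) * expDen (s i) (x i + t i)) :=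
      Finset.prod_le_prod' fun i _ => expDen_le_shift (hspos i) (ht0 i) (x i)
    refine h1.trans_eq ?_
    rw [Finset.prod_mul_distrib]
    congr 1
    rw [← ENNReal.ofReal_prod_of_nonneg (fun i _ => Real.exp_nonneg _), ← Real.exp_sum, hsum]
  set A : Set (Fin (k + 1) → ℝ) := haltEvent T a k with hAdef
  set B : Set (Fin (k + 1) → ℝ) := haltEvent T b k with hBdef
  have hA : MeasurableSet A := measurableSet_haltEvent T a k
  have hB : MeasurableSet B := measurableSet_haltEvent T b k
  set A' : Set (Fin (k + 1) → ℝ) := (fun y => y - t) ⁻¹' A with hA'def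
  have hsub : A' ⊆ B := by
    intro y hy
    have := hincl _ hy
    simpa [sub_add_cancel] using this
  calc Measure.pi (fun i => expDist (s i)) A
      = ∫⁻ x, A.indicator G x := by
        rw [hpi, withDensity_apply _ hA, ← lintegral_indicator hA]
    _ ≤ ∫⁻ x, ENNReal.ofReal (Real.exp E) * A.indicator (fun y => G (y + t)) x := by
        apply lintegral_mono
        intro x
        by_cases hx : x ∈ A
        · simp only [Set.indicator_of_mem hx]
          exact hGle x
        · simp only [Set.indicator_of_notMem hx, mul_zero, le_refl]
    _ = ENNReal.ofReal (Real.exp E) * ∫⁻ x, A.indicator (fun y => G (y + t)) x :=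
        lintegral_const_mul _ ((hGm.comp (by fun_prop)).indicator hA)
    _ = ENNReal.ofReal (Real.exp E) * ∫⁻ x, A'.indicator G (x + t) := by
        congr 1
        apply lintegral_congr
        intro x
        by_cases hx : x ∈ A
        · rw [Set.indicator_of_mem hx,
            Set.indicator_of_mem (show x + t ∈ A' by simp [hA'def, hx])]
        · rw [Set.indicator_of_notMem hx,
            Set.indicator_of_notMem (show x + t ∉ A' by simp [hA'def, hx])]
    _ = ENNReal.ofReal (Real.exp E) * ∫⁻ y, A'.indicator G y := by
        congr 1
        exact lintegral_add_right_eq_self (fun y => A'.indicator G y) t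
    _ ≤ ENNReal.ofReal (Real.exp E) * ∫⁻ y, B.indicator G y := by
        refine mul_le_mul_right (lintegral_mono fun y => ?_) _
        exact Set.indicator_le_indicator_of_subset hsub (fun _ => zero_le) y
    _ = ENNReal.ofReal (Real.exp E) * Measure.pi (fun i => expDist (s i)) B := by
        rw [hpi, withDensity_apply _ hB, ← lintegral_indicator hB]
end
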